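/- Suppose χ ∈ ℓ²(ℕ₀) with χ ≥ 0, ‖χ‖₂ = 1, satisfies the pointwise bound χ(i) ≤ C ∑_{j ≥ 0} (i+j+1)^{-1/2} P(S_{i+j} = i−j) χ(j) for all i, where S is a simple symmetric random walk. Then the tail satisfies ∑_{i ≥ k} χ(i)² ≤ C' k^{-1/2} for all k ≥ 1, and consequently ∑_i i^α χ(i)² < ∞ for every α ∈ (0, 1/2). -/

import Mathlib

set_option maxHeartbeats 1000000

noncomputable def rwProb (n : ℕ) (k : ℤ) : ℝ :=
  if |k| ≤ (n : ℤ) ∧ 2 ∣ ((n : ℤ) + k) then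
    ((n.choose (((n : ℤ) + k) / 2).toNat : ℕ) : ℝ) / 2 ^ n
  else 0

lemma rwProb_nonneg (n : ℕ) (k : ℤ) : 0 ≤ rwProb n k := by
  unfold rwProb; split <;> positivity

lemma rwProb_le_one (n : ℕ) (k : ℤ) : rwProb n k ≤ 1 := by
  unfold rwProb; split
  · rw [div_le_one (by positivity)]
    by_cases hle : (((n : ℤ) + k) / 2).toNat ≤ n
    · calc (n.choose (((n : ℤ) + k) / 2).toNat : ℝ)
          ≤ ((∑ i ∈ Finset.range (n+1), n.choose i : ℕ) : ℝ) := by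
            exact_mod_cast Finset.single_le_sum (f := fun i => n.choose i)
              (fun i _ => Nat.zero_le _) (Finset.mem_range.2 (by omega))
        _ = (2:ℝ)^n := by rw [Nat.sum_range_choose]; push_cast; ring
    · rw [Nat.choose_eq_zero_of_lt (by omega)]; norm_num
  · norm_num

noncomputable def G (p : ℕ × ℕ) : ℝ :=
  ((p.1:ℝ)+(p.2:ℝ)+1)^(-(3:ℝ)/2) * rwProb (p.1+p.2) ((p.1:ℤ)-(p.2:ℤ))

lemma G_nonneg (p : ℕ × ℕ) : 0 ≤ G p := by
  unfold G; have := rwProb_nonneg (p.1+p.2) ((p.1:ℤ)-(p.2:ℤ)); positivity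

lemma G_le (m j : ℕ) : G (m, j) ≤ ((m:ℝ)+(j:ℝ)+1)^(-(3:ℝ)/2) := by
  unfold G
  have h1 := rwProb_le_one (m+j) ((m:ℤ)-(j:ℤ))
  have h2 := rwProb_nonneg (m+j) ((m:ℤ)-(j:ℤ))
  have h3 : (0:ℝ) ≤ ((m:ℝ)+(j:ℝ)+1)^(-(3:ℝ)/2) := by positivity
  nlinarith

lemma summable_shift_rpow (c : ℕ) :
    Summable (fun j : ℕ => (((c:ℝ) + (j:ℝ) + 1)) ^ (-(3:ℝ)/2)) := by
  have h0 : Summable (fun n : ℕ => ((n:ℝ)) ^ (-(3:ℝ)/2)) :=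
    Real.summable_nat_rpow.2 (by norm_num)
  have h1 : Summable (fun n : ℕ => (((n + (c+1) : ℕ)):ℝ) ^ (-(3:ℝ)/2)) :=
    (summable_nat_add_iff (c+1)).2 h0
  apply h1.congr
  intro j
  congr 1
  push_cast
  ring

lemma summable_G (m : ℕ) : Summable (fun j => G (m, j)) :=
  Summable.of_nonneg_of_le (fun j => G_nonneg _) (fun j => G_le m j) (summable_shift_rpow m)

lemma rpow_neg_half_eq (x : ℝ) (hx : 0 < x) : x ^ (-(1:ℝ)/2) = (Real.sqrt x)⁻¹ := by
  rw [Real.sqrt_eq_rpow, neg_div, Real.rpow_neg hx.le]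

lemma rpow_neg_three_half_eq (x : ℝ) (hx : 0 < x) :
    x ^ (-(3:ℝ)/2) = (x * Real.sqrt x)⁻¹ := by
  have h : (-(3:ℝ)/2) = (-1) + (-(1)/2) := by norm_num
  rw [h, Real.rpow_add hx, Real.rpow_neg_one, rpow_neg_half_eq x hx, mul_inv]

lemma centralBinom_upper (u : ℕ) :
    (Nat.centralBinom u : ℝ) * Real.sqrt (3*u+1) ≤ 4 ^ u := by
  induction u with
  | zero => simp [Nat.centralBinom]
  | succ u ih =>
    have key : ((u:ℝ) + 1) * (Nat.centralBinom (u+1) : ℝ)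
        = 2 * (2*u+1) * Nat.centralBinom u := by
      have := Nat.succ_mul_centralBinom_succ u
      exact_mod_cast congrArg (Nat.cast (R := ℝ)) this
    have hu1 : (0:ℝ) < (u:ℝ) + 1 := by positivity
    have hsq : (2*(u:ℝ)+1) * Real.sqrt (3*(u:ℝ)+4) ≤ 2*((u:ℝ)+1) * Real.sqrt (3*u+1) := by
      have h1 : (2*(u:ℝ)+1) * Real.sqrt (3*(u:ℝ)+4)
          = Real.sqrt ((2*(u:ℝ)+1)^2 * (3*u+4)) := by
        rw [Real.sqrt_mul (by positivity), Real.sqrt_sq (by positivity)]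
      have h2 : 2*((u:ℝ)+1) * Real.sqrt (3*(u:ℝ)+1)
          = Real.sqrt ((2*((u:ℝ)+1))^2 * (3*u+1)) := by
        rw [Real.sqrt_mul (by positivity), Real.sqrt_sq (by positivity)]
      rw [h1, h2]
      apply Real.sqrt_le_sqrt
      nlinarith [Nat.cast_nonneg (α := ℝ) u]
    have hs1 : (0:ℝ) < Real.sqrt (3*(u:ℝ)+1) := Real.sqrt_pos.2 (by positivity)
    have hcb1 : (Nat.centralBinom (u+1) : ℝ) = 2 * (2*u+1) * Nat.centralBinom u / ((u:ℝ)+1) := by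
      field_simp at key ⊢; linarith [key]
    rw [hcb1]
    push_cast
    rw [show (3:ℝ)*((u:ℝ)+1)+1 = 3*(u:ℝ)+4 by ring]
    have hcbnn : (0:ℝ) ≤ (Nat.centralBinom u : ℝ) := by positivity
    have hstep : 2 * (2*(u:ℝ)+1) * Nat.centralBinom u * Real.sqrt (3*(u:ℝ)+4)
        ≤ 4 * ((u:ℝ)+1) * 4^u := by
      have hA : 2 * (2*(u:ℝ)+1) * Nat.centralBinom u * Real.sqrt (3*(u:ℝ)+4)
          ≤ 2 * (Nat.centralBinom u) * (2*((u:ℝ)+1) * Real.sqrt (3*u+1)) := by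
        nlinarith [hsq, hcbnn, Real.sqrt_nonneg (3*(u:ℝ)+4)]
      have hB : 2 * (Nat.centralBinom u : ℝ) * (2*((u:ℝ)+1) * Real.sqrt (3*u+1))
          ≤ 4 * ((u:ℝ)+1) * 4^u := by
        nlinarith [ih, hs1.le, hu1]
      linarith
    rw [div_mul_eq_mul_div, div_le_iff₀ hu1]
    calc 2 * (2*(u:ℝ)+1) * Nat.centralBinom u * Real.sqrt (3*(u:ℝ)+4)
        ≤ 4 * ((u:ℝ)+1) * 4^u := hstep
      _ = 4^(u+1) * ((u:ℝ)+1) := by ring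

lemma centralBinom_upper' (u : ℕ) :
    (Nat.centralBinom u : ℝ) ≤ 4 ^ u / Real.sqrt (3*u+1) := by
  have hs : (0:ℝ) < Real.sqrt (3*(u:ℝ)+1) := Real.sqrt_pos.2 (by positivity)
  rw [le_div_iff₀ hs]
  exact_mod_cast centralBinom_upper u

lemma rwProb_le_central (n : ℕ) (k : ℤ) :
    rwProb n k ≤ ((n.choose (n/2) : ℕ) : ℝ) / 2 ^ n := by
  unfold rwProb; split
  · apply div_le_div_of_nonneg_right ?_ (by positivity)
    · exact_mod_cast Nat.choose_le_middle _ n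
  · positivity

lemma rwProb_le (n : ℕ) (k : ℤ) : rwProb n k ≤ 2 / Real.sqrt ((n:ℝ)+1) := by
  refine (rwProb_le_central n k).trans ?_
  rcases Nat.even_or_odd n with ⟨u, hu⟩ | ⟨u, hu⟩
  · subst hu
    have h2 : (u+u)/2 = u := by omega
    rw [h2]
    have hc : (Nat.choose (u+u) u : ℝ) = Nat.centralBinom u := by
      rw [Nat.centralBinom]; norm_num [two_mul]
    rw [hc]
    have h4 : (2:ℝ)^(u+u) = 4^u := by rw [← two_mul]; rw [pow_mul]; norm_num
    rw [h4]
    have hle := centralBinom_upper' u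
    have hs : (0:ℝ) < Real.sqrt (3*(u:ℝ)+1) := Real.sqrt_pos.2 (by positivity)
    have hs2 : (0:ℝ) < Real.sqrt ((↑(u+u):ℝ)+1) := Real.sqrt_pos.2 (by positivity)
    rw [div_le_div_iff₀ (by positivity) hs2]
    have hkey : Real.sqrt ((↑(u+u):ℝ)+1) ≤ 2 * Real.sqrt (3*(u:ℝ)+1) := by
      rw [show (2:ℝ) * Real.sqrt (3*(u:ℝ)+1) = Real.sqrt (4*(3*(u:ℝ)+1)) by
        rw [show (4:ℝ)*(3*(u:ℝ)+1) = 2^2*(3*(u:ℝ)+1) by ring, Real.sqrt_mul (by positivity),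
          Real.sqrt_sq (by norm_num)]]
      apply Real.sqrt_le_sqrt; push_cast; nlinarith [Nat.cast_nonneg (α := ℝ) u]
    calc (Nat.centralBinom u : ℝ) * Real.sqrt ((↑(u+u):ℝ)+1)
        ≤ (4^u / Real.sqrt (3*(u:ℝ)+1)) * (2 * Real.sqrt (3*(u:ℝ)+1)) := by
          apply mul_le_mul hle hkey (Real.sqrt_nonneg _) (by positivity)
      _ = 2 * 4^u := by field_simp
      _ = 2 * (4:ℝ)^u := by norm_num
  · subst hu
    have h2 : (2*u+1)/2 = u := by omega
    rw [h2]
    have hch : (Nat.choose (2*u+1) u : ℝ) ≤ Nat.centralBinom (u+1) := by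
      have : Nat.choose (2*u+1) u ≤ Nat.choose (2*(u+1)) (u+1) := by
        rw [show 2*(u+1) = (2*u+1)+1 by ring, Nat.choose_succ_succ]
        exact Nat.le_add_right _ _
      rw [Nat.centralBinom]; exact_mod_cast this
    have hle := (hch.trans (centralBinom_upper' (u+1)))
    have hs : (0:ℝ) < Real.sqrt (3*((u:ℝ)+1)+1) := Real.sqrt_pos.2 (by positivity)
    have hs2 : (0:ℝ) < Real.sqrt ((↑(2*u+1):ℝ)+1) := Real.sqrt_pos.2 (by positivity)
    have hcast : (3*(((u:ℕ)+1:ℕ)):ℝ)+1 = 3*((u:ℝ)+1)+1 := by push_cast; ring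
    rw [hcast] at hle
    rw [div_le_div_iff₀ (by positivity) hs2]
    have hkey : Real.sqrt ((↑(2*u+1):ℝ)+1) ≤ Real.sqrt (3*((u:ℝ)+1)+1) := by
      apply Real.sqrt_le_sqrt; push_cast; nlinarith [Nat.cast_nonneg (α := ℝ) u]
    have h4 : (4:ℝ)^(u+1) = 2 * 2^(2*u+1) := by
      rw [show (4:ℝ) = 2^2 by norm_num, ← pow_mul]; ring
    calc (Nat.choose (2*u+1) u : ℝ) * Real.sqrt ((↑(2*u+1):ℝ)+1)
        ≤ (4^(u+1) / Real.sqrt (3*((u:ℝ)+1)+1)) * Real.sqrt (3*((u:ℝ)+1)+1) := by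
          apply mul_le_mul hle hkey (Real.sqrt_nonneg _) (by positivity)
      _ = 4^(u+1) := by field_simp
      _ = 2 * 2^(2*u+1) := h4

lemma rwProb_antidiag (n i : ℕ) (hi : i ≤ n) :
    rwProb n ((i:ℤ) - ((n - i : ℕ):ℤ)) = (n.choose i : ℝ) / 2^n := by
  have hni : ((n - i : ℕ):ℤ) = (n:ℤ) - i := by omega
  rw [hni]
  unfold rwProb
  have hc1 : |(i:ℤ) - ((n:ℤ) - i)| ≤ (n:ℤ) := by
    rw [abs_le]; omega
  have hc2 : (2:ℤ) ∣ ((n:ℤ) + ((i:ℤ) - ((n:ℤ) - i))) := ⟨i, by ring⟩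
  rw [if_pos ⟨hc1, hc2⟩]
  have ht : ((( n:ℤ) + ((i:ℤ) - ((n:ℤ) - i)))/2).toNat = i := by omega
  rw [ht]

lemma sum_rwProb_antidiag_le (n : ℕ) (s : Finset (ℕ × ℕ)) (hs : s ⊆ Finset.HasAntidiagonal.antidiagonal n) :
    ∑ p ∈ s, rwProb n ((p.1:ℤ) - (p.2:ℤ)) ≤ 1 := by
  calc ∑ p ∈ s, rwProb n ((p.1:ℤ) - (p.2:ℤ))
      ≤ ∑ p ∈ Finset.HasAntidiagonal.antidiagonal n, rwProb n ((p.1:ℤ) - (p.2:ℤ)) :=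
        Finset.sum_le_sum_of_subset_of_nonneg hs (fun p _ _ => rwProb_nonneg _ _)
    _ = ∑ i ∈ Finset.range (n+1), rwProb n ((i:ℤ) - ((n - i : ℕ):ℤ)) :=
        Finset.Nat.sum_antidiagonal_eq_sum_range_succ_mk _ n
    _ = ∑ i ∈ Finset.range (n+1), (n.choose i : ℝ) / 2^n := by
        apply Finset.sum_congr rfl
        intro i hi
        exact rwProb_antidiag n i (by simpa using Nat.lt_succ_iff.1 (Finset.mem_range.1 hi))
    _ = 1 := by
        rw [← Finset.sum_div]
        rw [show ∑ i ∈ Finset.range (n+1), (n.choose i : ℝ)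
            = ((∑ i ∈ Finset.range (n+1), n.choose i : ℕ):ℝ) by push_cast; ring]
        rw [Nat.sum_range_choose]
        norm_num

lemma telescope_step (n : ℕ) (hn : 1 ≤ n) :
    ((n:ℝ)+1) ^ (-(3:ℝ)/2) ≤ 2*(n:ℝ)^(-(1:ℝ)/2) - 2*((n:ℝ)+1)^(-(1:ℝ)/2) := by
  have hn0 : (0:ℝ) < (n:ℝ) := by exact_mod_cast hn
  have hn1 : (0:ℝ) < (n:ℝ)+1 := by linarith
  rw [rpow_neg_three_half_eq _ hn1, rpow_neg_half_eq _ hn0, rpow_neg_half_eq _ hn1]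
  set a := Real.sqrt (n:ℝ) with ha
  set b := Real.sqrt ((n:ℝ)+1) with hb
  have ha2 : a^2 = (n:ℝ) := Real.sq_sqrt hn0.le
  have hb2 : b^2 = (n:ℝ)+1 := Real.sq_sqrt hn1.le
  have hap : 0 < a := Real.sqrt_pos.2 hn0
  have hbp : 0 < b := Real.sqrt_pos.2 hn1
  have hab : a ≤ b := Real.sqrt_le_sqrt (by linarith)
  rw [show ((n:ℝ)+1) = b^2 by rw [hb2]]
  have hprod : (b-a)*(b+a) = 1 := by nlinarith [ha2, hb2]
  have h2 : 2*a⁻¹ - 2*b⁻¹ = 2*(b-a)/(a*b) := by field_simp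
  rw [h2, inv_eq_one_div, div_le_div_iff₀ (by positivity) (by positivity)]
  nlinarith [hprod, mul_pos hap hbp, mul_le_mul_of_nonneg_right hab (mul_pos hap hbp).le,
    mul_le_mul_of_nonneg_right (mul_le_mul_of_nonneg_right hab hbp.le) hbp.le]

lemma sum_Ico_rpow_le (k K : ℕ) (hk : 1 ≤ k) :
    ∑ n ∈ Finset.Ico k K, ((n:ℝ)+1) ^ (-(3:ℝ)/2) ≤ 2 * (k:ℝ)^(-(1:ℝ)/2) := by
  by_cases hkK : k ≤ K
  · have hle : ∑ n ∈ Finset.Ico k K, ((n:ℝ)+1) ^ (-(3:ℝ)/2)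
        ≤ ∑ n ∈ Finset.Ico k K, (2*(n:ℝ)^(-(1:ℝ)/2) - 2*((n:ℝ)+1)^(-(1:ℝ)/2)) := by
      apply Finset.sum_le_sum
      intro n hn
      exact telescope_step n (le_trans hk (Finset.mem_Ico.1 hn).1)
    refine hle.trans ?_
    rw [Finset.sum_Ico_eq_sum_range]
    have heq : ∑ i ∈ Finset.range (K - k),
          (2*((k+i:ℕ):ℝ)^(-(1:ℝ)/2) - 2*(((k+i:ℕ):ℝ)+1)^(-(1:ℝ)/2))
        = 2*((k:ℝ))^(-(1:ℝ)/2) - 2*(((k + (K-k):ℕ):ℝ))^(-(1:ℝ)/2) := by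
      have h := Finset.sum_range_sub' (fun i => 2*(((k+i:ℕ):ℝ))^(-(1:ℝ)/2)) (K - k)
      simp only [Nat.add_zero] at h
      rw [← h]
      apply Finset.sum_congr rfl
      intro i _
      congr 2
      push_cast; ring
    rw [heq]
    have hpos : (0:ℝ) ≤ 2*(((k + (K-k):ℕ):ℝ))^(-(1:ℝ)/2) := by positivity
    linarith
  · rw [Finset.Ico_eq_empty (by omega)]
    simp; positivity

lemma key_finite (k : ℕ) (hk : 1 ≤ k) (s t : Finset ℕ) :
    ∑ i ∈ s, ∑ j ∈ t, G (i+k, j) ≤ 2*(k:ℝ)^(-(1:ℝ)/2) := by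
  classical
  set B := s.sup id + t.sup id + k + 1 with hB
  set T := (Finset.Ico k B).biUnion
      (fun n => (Finset.HasAntidiagonal.antidiagonal n).filter (fun p => k ≤ p.1)) with hT
  have hdisj : (↑(Finset.Ico k B) : Set ℕ).PairwiseDisjoint
      (fun n => (Finset.HasAntidiagonal.antidiagonal n).filter (fun p : ℕ × ℕ => k ≤ p.1)) := by
    intro m _ n _ hmn
    simp only [Finset.disjoint_left]
    intro p hp hp'
    simp only [Finset.mem_filter, Finset.HasAntidiagonal.mem_antidiagonal] at hp hp'
    exact hmn (hp.1 ▸ hp'.1.symm ▸ rfl)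
  have step1 : ∑ i ∈ s, ∑ j ∈ t, G (i+k, j) = ∑ p ∈ s ×ˢ t, G (p.1+k, p.2) :=
    (Finset.sum_product' s t (fun i j => G (i+k, j))).symm
  have hinj : ∀ x ∈ s ×ˢ t, ∀ y ∈ s ×ˢ t,
      (fun p : ℕ × ℕ => (p.1+k, p.2)) x = (fun p : ℕ × ℕ => (p.1+k, p.2)) y → x = y := by
    intro x _ y _ h
    simp only [Prod.mk.injEq] at h
    exact Prod.ext (by omega) h.2
  have step2 : ∑ p ∈ s ×ˢ t, G (p.1+k, p.2)
      = ∑ q ∈ (s ×ˢ t).image (fun p : ℕ × ℕ => (p.1+k, p.2)), G q :=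
    (Finset.sum_image hinj).symm
  have hsub : (s ×ˢ t).image (fun p : ℕ × ℕ => (p.1+k, p.2)) ⊆ T := by
    intro q hq
    simp only [Finset.mem_image, Finset.mem_product] at hq
    obtain ⟨⟨i, j⟩, ⟨hi, hj⟩, rfl⟩ := hq
    simp only [hT, Finset.mem_biUnion, Finset.mem_Ico, Finset.mem_filter,
      Finset.HasAntidiagonal.mem_antidiagonal]
    refine ⟨i + k + j, ⟨by omega, ?_⟩, rfl, by omega⟩
    have h1 : i ≤ s.sup id := Finset.le_sup (f := id) hi
    have h2 : j ≤ t.sup id := Finset.le_sup (f := id) hj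
    omega
  have step3 : ∑ q ∈ (s ×ˢ t).image (fun p : ℕ × ℕ => (p.1+k, p.2)), G q
      ≤ ∑ q ∈ T, G q :=
    Finset.sum_le_sum_of_subset_of_nonneg hsub (fun q _ _ => G_nonneg q)
  have step4 : ∑ q ∈ T, G q
      = ∑ n ∈ Finset.Ico k B, ∑ q ∈ (Finset.HasAntidiagonal.antidiagonal n).filter (fun p => k ≤ p.1), G q :=
    Finset.sum_biUnion hdisj
  have inner : ∀ n ∈ Finset.Ico k B,
      ∑ q ∈ (Finset.HasAntidiagonal.antidiagonal n).filter (fun p => k ≤ p.1), G q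
        ≤ ((n:ℝ)+1)^(-(3:ℝ)/2) := by
    intro n _
    have heq : ∀ q ∈ (Finset.HasAntidiagonal.antidiagonal n).filter (fun p : ℕ × ℕ => k ≤ p.1),
        G q = ((n:ℝ)+1)^(-(3:ℝ)/2) * rwProb n ((q.1:ℤ)-(q.2:ℤ)) := by
      intro q hq
      simp only [Finset.mem_filter, Finset.HasAntidiagonal.mem_antidiagonal] at hq
      unfold G
      rw [hq.1]
      congr 2
      have := hq.1
      push_cast [← this]
      ring
    rw [Finset.sum_congr rfl heq, ← Finset.mul_sum]
    have hle := sum_rwProb_antidiag_le n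
      ((Finset.HasAntidiagonal.antidiagonal n).filter (fun p : ℕ×ℕ => k ≤ p.1)) (Finset.filter_subset _ _)
    have hw : (0:ℝ) ≤ ((n:ℝ)+1)^(-(3:ℝ)/2) := by positivity
    calc ((n:ℝ)+1)^(-(3:ℝ)/2) * ∑ q ∈ (Finset.HasAntidiagonal.antidiagonal n).filter (fun p : ℕ×ℕ => k ≤ p.1),
          rwProb n ((q.1:ℤ)-(q.2:ℤ))
        ≤ ((n:ℝ)+1)^(-(3:ℝ)/2) * 1 := mul_le_mul_of_nonneg_left hle hw
      _ = ((n:ℝ)+1)^(-(3:ℝ)/2) := mul_one _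
  rw [step1, step2]
  refine step3.trans ?_
  rw [step4]
  exact (Finset.sum_le_sum inner).trans (sum_Ico_rpow_le k B hk)

lemma tsum_mul_le_sqrt (f g : ℕ → ℝ) (hf : ∀ i, 0 ≤ f i) (hg : ∀ i, 0 ≤ g i)
    (hf2 : Summable fun i => f i ^ 2) (hg2 : Summable fun i => g i ^ 2) :
    ∑' i, f i * g i ≤ Real.sqrt (∑' i, f i ^ 2) * Real.sqrt (∑' i, g i ^ 2) := by
  have hsum : Summable fun i => f i * g i := by
    apply Summable.of_nonneg_of_le (fun i => mul_nonneg (hf i) (hg i))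
      (fun i => ?_) ((hf2.add hg2).div_const 2)
    have := two_mul_le_add_sq (f i) (g i)
    linarith
  apply Summable.tsum_le_of_sum_le hsum
  intro s
  have cs := Finset.sum_mul_sq_le_sq_mul_sq s f g
  have h1 : ∑ i ∈ s, f i * g i ≤ Real.sqrt ((∑ i ∈ s, f i ^ 2) * ∑ i ∈ s, g i ^ 2) := by
    have hnn : 0 ≤ ∑ i ∈ s, f i * g i :=
      Finset.sum_nonneg fun i _ => mul_nonneg (hf i) (hg i)
    nlinarith [Real.sq_sqrt (show (0:ℝ) ≤ (∑ i ∈ s, f i ^ 2) * ∑ i ∈ s, g i ^ 2 from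
      mul_nonneg (Finset.sum_nonneg fun i _ => sq_nonneg _)
        (Finset.sum_nonneg fun i _ => sq_nonneg _)),
      Real.sqrt_nonneg ((∑ i ∈ s, f i ^ 2) * ∑ i ∈ s, g i ^ 2)]
  refine h1.trans ?_
  rw [Real.sqrt_mul (Finset.sum_nonneg fun i _ => sq_nonneg _)]
  apply mul_le_mul
  · exact Real.sqrt_le_sqrt (Summable.sum_le_tsum s (fun i _ => sq_nonneg _) hf2)
  · exact Real.sqrt_le_sqrt (Summable.sum_le_tsum s (fun i _ => sq_nonneg _) hg2)
  · exact Real.sqrt_nonneg _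
  · exact Real.sqrt_nonneg _

lemma a_sq_le (m j : ℕ) :
    (((m:ℝ)+(j:ℝ)+1) ^ (-(1:ℝ)/2) * rwProb (m+j) ((m:ℤ)-(j:ℤ)))^2 ≤ 2 * G (m, j) := by
  have hx : (0:ℝ) < (m:ℝ)+(j:ℝ)+1 := by positivity
  have hP0 : 0 ≤ rwProb (m+j) ((m:ℤ)-(j:ℤ)) := rwProb_nonneg _ _
  have hP : rwProb (m+j) ((m:ℤ)-(j:ℤ)) ≤ 2 / Real.sqrt ((m:ℝ)+(j:ℝ)+1) := by
    have := rwProb_le (m+j) ((m:ℤ)-(j:ℤ))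
    rwa [show ((↑(m+j):ℝ)+1) = (m:ℝ)+(j:ℝ)+1 by push_cast; ring] at this
  unfold G
  simp only
  rw [rpow_neg_half_eq _ hx, rpow_neg_three_half_eq _ hx]
  set P := rwProb (m+j) ((m:ℤ)-(j:ℤ))
  set s := Real.sqrt ((m:ℝ)+(j:ℝ)+1) with hsdef
  have hsp : 0 < s := Real.sqrt_pos.2 hx
  have hs2 : s^2 = (m:ℝ)+(j:ℝ)+1 := Real.sq_sqrt hx.le
  have hPs : P * s ≤ 2 := (le_div_iff₀ hsp).1 hP
  rw [show ((m:ℝ)+(j:ℝ)+1) = s^2 by rw [hs2]]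
  have hsne : s ≠ 0 := hsp.ne'
  rw [show (s⁻¹ * P)^2 = P^2/(s^2) by field_simp,
    show 2*((s^2*s)⁻¹ * P) = 2*P/(s^2*s) by field_simp,
    div_le_div_iff₀ (by positivity) (by positivity)]
  nlinarith [mul_le_mul_of_nonneg_left hPs (by positivity : (0:ℝ) ≤ P*s^2), sq_nonneg P,
    mul_pos hsp hsp]

/-- Tail estimates for a nonnegative unit vector `χ ∈ ℓ²(ℕ)` satisfying the
pointwise bound `χ(i) ≤ C ∑_j (i+j+1)^{-1/2} P(S_{i+j} = i−j) χ(j)`: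
`∑_{i ≥ k} χ(i)² ≤ C' k^{-1/2}` and `∑_i i^α χ(i)² < ∞` for `α ∈ (0,1/2)`. -/
theorem stmt16 (χ : ℕ → ℝ) (hχnonneg : ∀ i, 0 ≤ χ i)
    (hχsq : Summable fun i => (χ i) ^ 2) (hχnorm : ∑' i, (χ i) ^ 2 = 1)
    (C : ℝ)
    (hbound : ∀ i : ℕ, χ i ≤ C * ∑' j : ℕ,
      ((i : ℝ) + (j : ℝ) + 1) ^ (-(1 : ℝ) / 2) * rwProb (i + j) ((i : ℤ) - (j : ℤ)) * χ j) :
    (∃ C' : ℝ, ∀ k : ℕ, 1 ≤ k →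
      ∑' i : ℕ, (χ (i + k)) ^ 2 ≤ C' * (k : ℝ) ^ (-(1 : ℝ) / 2)) ∧
    (∀ α : ℝ, 0 < α → α < 1 / 2 →
      Summable fun i : ℕ => (i : ℝ) ^ α * (χ i) ^ 2) := by
  have hann : ∀ m j : ℕ, 0 ≤ ((m:ℝ)+(j:ℝ)+1) ^ (-(1:ℝ)/2) * rwProb (m+j) ((m:ℤ)-(j:ℤ)) :=
    fun m j => mul_nonneg (Real.rpow_nonneg (by positivity) _) (rwProb_nonneg _ _)
  have hsumma2 : ∀ m : ℕ, Summable (fun j : ℕ =>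
      (((m:ℝ)+(j:ℝ)+1) ^ (-(1:ℝ)/2) * rwProb (m+j) ((m:ℤ)-(j:ℤ)))^2) := fun m =>
    Summable.of_nonneg_of_le (fun j => sq_nonneg _) (fun j => a_sq_le m j)
      ((summable_G m).mul_left 2)
  have hchi2 : ∀ m : ℕ, χ m ^ 2 ≤ C^2 *
      ∑' j : ℕ, (((m:ℝ)+(j:ℝ)+1) ^ (-(1:ℝ)/2) * rwProb (m+j) ((m:ℤ)-(j:ℤ)))^2 := by
    intro m
    set b := ∑' j : ℕ, (((m:ℝ)+(j:ℝ)+1) ^ (-(1:ℝ)/2) * rwProb (m+j) ((m:ℤ)-(j:ℤ)))^2 with hbdef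
    have hb0 : 0 ≤ b := tsum_nonneg fun j => sq_nonneg _
    have hT0 : 0 ≤ ∑' j : ℕ, ((m:ℝ)+(j:ℝ)+1) ^ (-(1:ℝ)/2) * rwProb (m+j) ((m:ℤ)-(j:ℤ)) * χ j :=
      tsum_nonneg fun j => mul_nonneg (hann m j) (hχnonneg j)
    have h1 : χ m ≤ |C| *
        ∑' j : ℕ, ((m:ℝ)+(j:ℝ)+1) ^ (-(1:ℝ)/2) * rwProb (m+j) ((m:ℤ)-(j:ℤ)) * χ j :=
      (hbound m).trans (mul_le_mul_of_nonneg_right (le_abs_self C) hT0)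
    have hCS := tsum_mul_le_sqrt
      (fun j : ℕ => ((m:ℝ)+(j:ℝ)+1) ^ (-(1:ℝ)/2) * rwProb (m+j) ((m:ℤ)-(j:ℤ))) χ
      (hann m) hχnonneg (hsumma2 m) hχsq
    rw [hχnorm, Real.sqrt_one, mul_one] at hCS
    have h2 : χ m ≤ |C| * Real.sqrt b :=
      h1.trans (mul_le_mul_of_nonneg_left hCS (abs_nonneg C))
    calc χ m ^2 ≤ (|C| * Real.sqrt b)^2 := pow_le_pow_left₀ (hχnonneg m) h2 2
      _ = C^2 * b := by rw [mul_pow, sq_abs, Real.sq_sqrt hb0]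
  have key : ∀ k : ℕ, 1 ≤ k → ∑' i : ℕ, (χ (i + k))^2 ≤ 4*C^2 * (k:ℝ)^(-(1:ℝ)/2) := by
    intro k hk
    have hsummshift : Summable (fun i => χ (i+k)^2) := (summable_nat_add_iff k).2 hχsq
    apply Summable.tsum_le_of_sum_le hsummshift
    intro s
    have h2 : ∀ i : ℕ, ∑' j : ℕ, ((((i+k:ℕ):ℝ)+(j:ℝ)+1) ^ (-(1:ℝ)/2)
        * rwProb ((i+k)+j) (((i+k:ℕ):ℤ)-(j:ℤ)))^2 ≤ 2 * ∑' j : ℕ, G (i+k, j) := by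
      intro i
      rw [← tsum_mul_left]
      exact Summable.tsum_le_tsum (fun j => a_sq_le (i+k) j) (hsumma2 (i+k))
        ((summable_G (i+k)).mul_left 2)
    have h4 : ∑' j : ℕ, ∑ i ∈ s, G (i+k, j) ≤ 2*(k:ℝ)^(-(1:ℝ)/2) := by
      apply tsum_le_of_sum_le' (by positivity)
      intro t
      rw [Finset.sum_comm]
      exact key_finite k hk s t
    calc ∑ i ∈ s, χ (i+k)^2
        ≤ ∑ i ∈ s, C^2 * ∑' j : ℕ, ((((i+k:ℕ):ℝ)+(j:ℝ)+1) ^ (-(1:ℝ)/2)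
            * rwProb ((i+k)+j) (((i+k:ℕ):ℤ)-(j:ℤ)))^2 :=
          Finset.sum_le_sum fun i _ => hchi2 (i+k)
      _ ≤ ∑ i ∈ s, C^2 * (2 * ∑' j : ℕ, G (i+k, j)) :=
          Finset.sum_le_sum fun i _ => mul_le_mul_of_nonneg_left (h2 i) (sq_nonneg C)
      _ = C^2 * (2 * ∑ i ∈ s, ∑' j : ℕ, G (i+k, j)) := by
          rw [← Finset.mul_sum, ← Finset.mul_sum]
      _ = C^2 * (2 * ∑' j : ℕ, ∑ i ∈ s, G (i+k, j)) := by
          rw [Summable.tsum_finsetSum (fun i _ => summable_G (i+k))]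
      _ ≤ C^2 * (2 * (2*(k:ℝ)^(-(1:ℝ)/2))) := by
          have h5 := mul_le_mul_of_nonneg_left h4 (by norm_num : (0:ℝ) ≤ 2)
          exact mul_le_mul_of_nonneg_left h5 (sq_nonneg C)
      _ = 4*C^2 * (k:ℝ)^(-(1:ℝ)/2) := by ring
  constructor
  · exact ⟨4*C^2, key⟩
  · intro α hα0 hα
    have hσ : ∀ m N : ℕ, 1 ≤ m →
        ∑ i ∈ Finset.Ico m N, χ i ^2 ≤ 4*C^2 * (m:ℝ)^(-(1:ℝ)/2) := by
      intro m N hm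
      rw [Finset.sum_Ico_eq_sum_range]
      calc ∑ i ∈ Finset.range (N-m), χ (m+i)^2
          = ∑ i ∈ Finset.range (N-m), χ (i+m)^2 :=
            Finset.sum_congr rfl fun i _ => by rw [Nat.add_comm]
        _ ≤ ∑' i, χ (i+m)^2 :=
            Summable.sum_le_tsum _ (fun i _ => sq_nonneg _) ((summable_nat_add_iff m).2 hχsq)
        _ ≤ 4*C^2 * (m:ℝ)^(-(1:ℝ)/2) := key m hm
    have hS : Summable (fun m : ℕ => ((m:ℝ)+1)^(α - 3/2)) := by
      have h0 : Summable (fun n : ℕ => ((n:ℝ))^(α-3/2)) :=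
        Real.summable_nat_rpow.2 (by linarith)
      have h1 := (summable_nat_add_iff 1).2 h0
      apply h1.congr
      intro m
      congr 1
      push_cast
      ring
    apply summable_of_sum_range_le (c := 4*C^2 * ∑' m : ℕ, ((m:ℝ)+1)^(α-3/2))
      (fun n => mul_nonneg (Real.rpow_nonneg (Nat.cast_nonneg n) α) (sq_nonneg _))
    intro N
    have pow_le_sum : ∀ i : ℕ, (i:ℝ)^α ≤ ∑ m ∈ Finset.Icc 1 i, (m:ℝ)^(α-1) := by
      intro i
      rcases Nat.eq_zero_or_pos i with hi | hi
      · subst hi; simp [Real.zero_rpow hα0.ne']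
      · have hi0 : (0:ℝ) < (i:ℝ) := by exact_mod_cast hi
        have hterm : ∀ m ∈ Finset.Icc 1 i, (i:ℝ)^(α-1) ≤ (m:ℝ)^(α-1) := by
          intro m hm
          obtain ⟨hm1, hmi⟩ := Finset.mem_Icc.1 hm
          exact Real.rpow_le_rpow_of_nonpos (by exact_mod_cast hm1)
            (by exact_mod_cast hmi) (by linarith)
        have hsplit := Real.rpow_add hi0 1 (α-1)
        rw [show (1:ℝ)+(α-1) = α by ring, Real.rpow_one] at hsplit
        calc (i:ℝ)^α = (i:ℝ) * (i:ℝ)^(α-1) := hsplit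
          _ = ∑ m ∈ Finset.Icc 1 i, (i:ℝ)^(α-1) := by
              rw [Finset.sum_const, Nat.card_Icc]
              simp [nsmul_eq_mul]
          _ ≤ ∑ m ∈ Finset.Icc 1 i, (m:ℝ)^(α-1) := Finset.sum_le_sum hterm
    calc ∑ i ∈ Finset.range N, (i:ℝ)^α * χ i^2
        ≤ ∑ i ∈ Finset.range N, ∑ m ∈ Finset.range N,
            (if m ∈ Finset.Icc 1 i then (m:ℝ)^(α-1) * χ i^2 else 0) := by
          apply Finset.sum_le_sum
          intro i hi
          rw [Finset.sum_ite_mem]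
          have hsub : Finset.Icc 1 i ⊆ Finset.range N := by
            intro m hm
            rw [Finset.mem_range]
            have h1 := (Finset.mem_Icc.1 hm).2
            have h2 := Finset.mem_range.1 hi
            omega
          rw [Finset.inter_eq_right.2 hsub, ← Finset.sum_mul]
          exact mul_le_mul_of_nonneg_right (pow_le_sum i) (sq_nonneg _)
      _ = ∑ m ∈ Finset.range N, ∑ i ∈ Finset.range N,
            (if m ∈ Finset.Icc 1 i then (m:ℝ)^(α-1) * χ i^2 else 0) := Finset.sum_comm
      _ ≤ ∑ m ∈ Finset.range N,
            (if 1 ≤ m then (m:ℝ)^(α-1) * (4*C^2 * (m:ℝ)^(-(1:ℝ)/2)) else 0) := by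
          apply Finset.sum_le_sum
          intro m _
          by_cases h1m : 1 ≤ m
          · rw [if_pos h1m]
            have hcongr : ∀ i ∈ Finset.range N,
                (if m ∈ Finset.Icc 1 i then (m:ℝ)^(α-1) * χ i^2 else 0)
                  = (if i ∈ Finset.Ico m N then (m:ℝ)^(α-1) * χ i^2 else 0) := by
              intro i hi
              have hiN := Finset.mem_range.1 hi
              by_cases hmi : m ≤ i
              · rw [if_pos (Finset.mem_Icc.2 ⟨h1m, hmi⟩), if_pos (Finset.mem_Ico.2 ⟨hmi, hiN⟩)]
              · rw [if_neg (fun hc => hmi (Finset.mem_Icc.1 hc).2),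
                  if_neg (fun hc => hmi (Finset.mem_Ico.1 hc).1)]
            have hsub2 : Finset.Ico m N ⊆ Finset.range N := by
              intro x hx
              rw [Finset.mem_range]
              exact (Finset.mem_Ico.1 hx).2
            rw [Finset.sum_congr rfl hcongr, Finset.sum_ite_mem,
              Finset.inter_eq_right.2 hsub2, ← Finset.mul_sum]
            exact mul_le_mul_of_nonneg_left (hσ m N h1m)
              (Real.rpow_nonneg (Nat.cast_nonneg m) _)
          · rw [if_neg h1m]
            apply le_of_eq
            apply Finset.sum_eq_zero
            intro i _
            rw [if_neg (fun hc => h1m (Finset.mem_Icc.1 hc).1)]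
      _ ≤ 4*C^2 * ∑' m : ℕ, ((m:ℝ)+1)^(α-3/2) := by
          have hterm : ∀ m ∈ Finset.range N,
              (if 1 ≤ m then (m:ℝ)^(α-1) * (4*C^2 * (m:ℝ)^(-(1:ℝ)/2)) else 0)
                = 4*C^2 * (if 1 ≤ m then (m:ℝ)^(α-3/2) else 0) := by
            intro m _
            by_cases h1m : 1 ≤ m
            · rw [if_pos h1m, if_pos h1m]
              have hm0 : (0:ℝ) < m := by exact_mod_cast h1m
              rw [show α - 3/2 = (α-1) + (-(1:ℝ)/2) by ring, Real.rpow_add hm0]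
              ring
            · rw [if_neg h1m, if_neg h1m, mul_zero]
          rw [Finset.sum_congr rfl hterm, ← Finset.mul_sum]
          apply mul_le_mul_of_nonneg_left ?_ (by positivity)
          have hsplit : ∑ m ∈ Finset.range N, (if 1 ≤ m then (m:ℝ)^(α-3/2) else 0)
              = ∑ m ∈ Finset.Ico 1 N, (m:ℝ)^(α-3/2) := by
            rw [← Finset.sum_filter]
            congr 1
            ext m
            simp only [Finset.mem_filter, Finset.mem_range, Finset.mem_Ico]
            omega
          rw [hsplit, Finset.sum_Ico_eq_sum_range]
          calc ∑ i ∈ Finset.range (N-1), ((1+i:ℕ):ℝ)^(α-3/2)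
              = ∑ i ∈ Finset.range (N-1), ((i:ℝ)+1)^(α-3/2) :=
                Finset.sum_congr rfl fun i _ => by push_cast; rw [add_comm]
            _ ≤ ∑' m : ℕ, ((m:ℝ)+1)^(α-3/2) :=
                Summable.sum_le_tsum _ (fun i _ => Real.rpow_nonneg (by positivity) _) hS
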